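/- arXiv:2201.13372 — 4 statements merged into one kernel-verified Lean document; each statement's English description precedes it below -/
import Mathlib

section
/- Let X be a real random variable with mean μ and centered (1+γ)-moment E|X − μ|^{1+γ} = M < ∞ for γ ∈ (0,1], and write X̄ = X − μ. For ε ∈ (0,2/5], if Q_ε denotes an ε-quantile of X̄, then E[X̄² · 1{Q_{2ε}(X̄) ≤ X̄ ≤ Q_{1−ε/2}(X̄)}] ≤ 2ε (2M/ε)^{2/(1+γ)}, and E[Q_{1−ε/2}(X̄)² · 1{X̄ ≥ Q_{1−ε/2}(X̄)}] ≤ 2ε (2M/ε)^{2/(1+γ)}. -/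
open MeasureTheory

/-!
Write `X̄ = X - E X`, `p = 1 + γ` and `B = (2M/ε)^{1/p}`, so that `M = (ε/2) B^p`. Each of the
sets `{X̄ ≥ q2}`, `{X̄ ≤ q1}` and `{X̄ < q2}` has probability at least `ε/2` (the last because
`ε ≤ 1`), so Markov's inequality for `|X̄|^p` bounds `q2`, `-q1` and `-q2` by `B`. Hence
`|X̄| ≤ B` on `{q1 ≤ X̄ ≤ q2}`, where `X̄² ≤ |X̄|^p B^{2-p}`, and integrating gives
`M B^{2-p} = (ε/2) B²`. Likewise `q2² P(X̄ ≥ q2) ≤ (ε/2) B²`.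
-/

namespace Real

theorem sq_eq_rpow_mul_rpow_sub {x : ℝ} (hx : 0 ≤ x) (p : ℝ) : x ^ 2 = x ^ p * x ^ (2 - p) := by
  rw [← rpow_add' hx (by norm_num), add_sub_cancel, rpow_two]

theorem sq_le_rpow_mul_rpow_sub {x B p : ℝ} (hx : 0 ≤ x) (hxB : x ≤ B) (hp : p ≤ 2) :
    x ^ 2 ≤ x ^ p * B ^ (2 - p) := by
  rw [sq_eq_rpow_mul_rpow_sub hx p]
  gcongr

end Real

section Moments

variable {Ω : Type*} [MeasurableSpace Ω] {μ : Measure Ω} {f : Ω → ℝ} {p : ℝ}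

theorem le_of_integral_rpow_le_mul_rpow [IsFiniteMeasure μ] (hp : 0 < p)
    (hf : Integrable (fun ω => |f ω| ^ p) μ) {a B : ℝ} (ha : 0 < a) (hB : 0 ≤ B)
    (hfB : ∫ ω, |f ω| ^ p ∂μ ≤ a * B ^ p) {s : Set Ω} {t : ℝ} (hs : ∀ ω ∈ s, t ≤ |f ω|)
    (has : a ≤ μ.real s) : t ≤ B := by
  rcases le_or_gt t 0 with ht | ht
  · exact ht.trans hB
  rw [← Real.rpow_le_rpow_iff ht.le hB hp, ← mul_le_mul_iff_right₀ ha]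
  have hsub : s ⊆ {ω | t ^ p ≤ |f ω| ^ p} := fun ω hω =>
    Real.rpow_le_rpow ht.le (hs ω hω) hp.le
  calc a * t ^ p ≤ t ^ p * μ.real {ω | t ^ p ≤ |f ω| ^ p} := by
        rw [mul_comm]
        gcongr
        exact has.trans (measureReal_mono hsub)
    _ ≤ ∫ ω, |f ω| ^ p ∂μ :=
        mul_meas_ge_le_integral_of_nonneg (.of_forall fun ω => by positivity) hf _
    _ ≤ a * B ^ p := hfB

theorem setIntegral_sq_le_of_abs_le (hf : AEStronglyMeasurable f μ) (hp : p ≤ 2)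
    (hfp : Integrable (fun ω => |f ω| ^ p) μ) {s : Set Ω} (hs : MeasurableSet s) {B : ℝ}
    (hB : 0 ≤ B) (hfB : ∀ ω ∈ s, |f ω| ≤ B) :
    ∫ ω in s, f ω ^ 2 ∂μ ≤ B ^ (2 - p) * ∫ ω, |f ω| ^ p ∂μ := by
  have hpoint : ∀ ω ∈ s, f ω ^ 2 ≤ |f ω| ^ p * B ^ (2 - p) := fun ω hω => by
    simpa only [sq_abs] using Real.sq_le_rpow_mul_rpow_sub (abs_nonneg _) (hfB ω hω) hp
  have hdom : IntegrableOn (fun ω => |f ω| ^ p * B ^ (2 - p)) s μ :=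
    (hfp.mul_const _).integrableOn
  have hsq : IntegrableOn (fun ω => f ω ^ 2) s μ := by
    refine hdom.mono' (hf.pow 2).restrict (ae_restrict_of_forall_mem hs fun ω hω => ?_)
    rw [Real.norm_of_nonneg (sq_nonneg _)]
    exact hpoint ω hω
  calc ∫ ω in s, f ω ^ 2 ∂μ ≤ ∫ ω in s, |f ω| ^ p * B ^ (2 - p) ∂μ :=
        setIntegral_mono_on hsq hdom hs hpoint
    _ = B ^ (2 - p) * ∫ ω in s, |f ω| ^ p ∂μ := by rw [integral_mul_const, mul_comm]
    _ ≤ B ^ (2 - p) * ∫ ω, |f ω| ^ p ∂μ := by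
        exact mul_le_mul_of_nonneg_left
          (setIntegral_le_integral hfp (.of_forall fun ω => by positivity)) (by positivity)

end Moments

theorem quantile_clipped_second_moment_general {Ω : Type*} [MeasurableSpace Ω] (μ : Measure Ω)
    [IsProbabilityMeasure μ] (X : Ω → ℝ) (hX : Measurable X)
    (γ M : ℝ) (hγ : γ ∈ Set.Ioc (0 : ℝ) 1)
    (hmom : Integrable (fun ω => |X ω - ∫ ω', X ω' ∂μ| ^ (1 + γ)) μ)
    (hM : ∫ ω, |X ω - ∫ ω', X ω' ∂μ| ^ (1 + γ) ∂μ = M)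
    (ε q1 q2 : ℝ) (hε : ε ∈ Set.Ioc (0 : ℝ) (2 / 5))
    (hq1 : (μ {ω | X ω - ∫ ω', X ω' ∂μ ≤ q1}).toReal = 2 * ε)
    (hq2 : (μ {ω | q2 ≤ X ω - ∫ ω', X ω' ∂μ}).toReal = ε / 2) :
    (∫ ω in {ω | q1 ≤ X ω - ∫ ω', X ω' ∂μ ∧ X ω - ∫ ω', X ω' ∂μ ≤ q2},
        (X ω - ∫ ω', X ω' ∂μ) ^ 2 ∂μ) ≤ 2 * ε * (2 * M / ε) ^ (2 / (1 + γ)) ∧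
    q2 ^ 2 * (μ {ω | q2 ≤ X ω - ∫ ω', X ω' ∂μ}).toReal
      ≤ 2 * ε * (2 * M / ε) ^ (2 / (1 + γ)) := by
  obtain ⟨hγ0, hγ1⟩ := hγ
  obtain ⟨hε0, hε1⟩ := hε
  set Y := fun ω => X ω - ∫ ω', X ω' ∂μ
  have hY : Measurable Y := hX.sub_const _
  simp only [← measureReal_def] at hq1 hq2 ⊢
  have hM0 : 0 ≤ M := hM ▸ integral_nonneg fun ω => by positivity
  set B := (2 * M / ε) ^ (1 + γ)⁻¹ with hB
  have hB0 : 0 ≤ B := by positivity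
  have hMB : M = ε / 2 * B ^ (1 + γ) := by
    rw [Real.rpow_inv_rpow (by positivity) (by linarith)]
    field_simp
  have hle_B {s : Set Ω} {t : ℝ} (hs : ∀ ω ∈ s, t ≤ |Y ω|) (has : ε / 2 ≤ μ.real s) : t ≤ B :=
    le_of_integral_rpow_le_mul_rpow (by linarith) hmom (by linarith) hB0 (hM.trans hMB).le hs has
  have hq2_le : q2 ≤ B := hle_B (fun ω hω => hω.trans (le_abs_self _)) hq2.ge
  have hq1_ge : -B ≤ q1 := neg_le.1 <| hle_B (s := {ω | Y ω ≤ q1})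
    (fun ω hω => (neg_le_neg hω).trans (neg_le_abs _)) (by linarith)
  have hq2_ge : -B ≤ q2 := neg_le.1 <| hle_B (s := {ω | q2 ≤ Y ω}ᶜ)
    (fun ω (hω : ¬q2 ≤ Y ω) => (neg_le_neg (not_le.1 hω).le).trans (neg_le_abs _))
    (by rw [probReal_compl_eq_one_sub (measurableSet_le measurable_const hY)]; linarith)
  have hB2 : (2 * M / ε) ^ (2 / (1 + γ)) = B ^ 2 := by
    rw [hB, ← Real.rpow_natCast, ← Real.rpow_mul (by positivity), inv_mul_eq_div]
    norm_num
  have hε : ε / 2 * B ^ 2 ≤ 2 * ε * B ^ 2 := by gcongr; linarith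
  rw [hB2]
  refine ⟨le_trans ?_ hε, le_trans ?_ hε⟩
  · calc _ ≤ B ^ (2 - (1 + γ)) * M := hM ▸ setIntegral_sq_le_of_abs_le hY.aestronglyMeasurable
          (by linarith) hmom (hY measurableSet_Icc) hB0
          fun ω (hω : q1 ≤ Y ω ∧ Y ω ≤ q2) => abs_le.2 ⟨hq1_ge.trans hω.1, hω.2.trans hq2_le⟩
      _ = ε / 2 * B ^ 2 := by rw [hMB, Real.sq_eq_rpow_mul_rpow_sub hB0 (1 + γ)]; ring
  · rw [hq2, mul_comm]
    exact mul_le_mul_of_nonneg_left (sq_le_sq' hq2_ge hq2_le) (by linarith)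

/-- Quantile-clipped second moment bounds for the trimmed-mean analysis: if `X̄ = X − E X` has
centered `(1+γ)`-moment `M`, and `q1`, `q2` are the `2ε`- and `(1−ε/2)`-quantiles of `X̄`
(in the sense `P(X̄ ≤ q1) = 2ε` and `P(X̄ ≥ q2) = ε/2`), with `ε ∈ (0, 2/5]`, then
`E[X̄² 1{q1 ≤ X̄ ≤ q2}] ≤ 2ε (2M/ε)^{2/(1+γ)}` and
`E[q2² 1{X̄ ≥ q2}] ≤ 2ε (2M/ε)^{2/(1+γ)}`. -/
theorem quantile_clipped_second_moment {Ω : Type*} [MeasurableSpace Ω] (μ : Measure Ω)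
    [IsProbabilityMeasure μ] (X : Ω → ℝ) (hX : Measurable X) (hint : Integrable X μ)
    (γ M : ℝ) (hγ : γ ∈ Set.Ioc (0 : ℝ) 1)
    (hmom : Integrable (fun ω => |X ω - ∫ ω', X ω' ∂μ| ^ (1 + γ)) μ)
    (hM : ∫ ω, |X ω - ∫ ω', X ω' ∂μ| ^ (1 + γ) ∂μ = M)
    (ε q1 q2 : ℝ) (hε : ε ∈ Set.Ioc (0 : ℝ) (2 / 5))
    (hq1 : (μ {ω | X ω - ∫ ω', X ω' ∂μ ≤ q1}).toReal = 2 * ε)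
    (hq2 : (μ {ω | q2 ≤ X ω - ∫ ω', X ω' ∂μ}).toReal = ε / 2) :
    (∫ ω in {ω | q1 ≤ X ω - ∫ ω', X ω' ∂μ ∧ X ω - ∫ ω', X ω' ∂μ ≤ q2},
        (X ω - ∫ ω', X ω' ∂μ) ^ 2 ∂μ) ≤ 2 * ε * (2 * M / ε) ^ (2 / (1 + γ)) ∧
    q2 ^ 2 * (μ {ω | q2 ≤ X ω - ∫ ω', X ω' ∂μ}).toReal
      ≤ 2 * ε * (2 * M / ε) ^ (2 / (1 + γ)) :=
  quantile_clipped_second_moment_general μ X hX γ M hγ hmom hM ε q1 q2 hε hq1 hq2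
end

section
/- Let X be a real random variable with mean μ, X̄ = X − μ, and E|X̄|^{1+γ} = M < ∞ with γ ∈ (0,1]. Then for ε ∈ (0,1), E[|X̄ − Q_{ε/2}(X̄)| · 1{X̄ ≤ Q_{ε/2}(X̄)}] ≤ 2 M^{1/(1+γ)} (ε/2)^{γ/(1+γ)}. -/
/-! Write `Y = X − E X` and `A = {Y ≤ q}`, so `P(A) = ε/2`. Since `|Y − q| ≤ |Y| + |q|`, it
suffices to bound `E[|Y| 1_A]` and `|q| P(A)`, each by `M^{1/(1+γ)} (ε/2)^{γ/(1+γ)}`. The first is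
Hölder's inequality with exponents `1+γ` and `(1+γ)/γ`. For the second, Markov's inequality applied
to `|Y|^{1+γ}` gives `|q|^{1+γ} P(A) ≤ M`: if `q < 0` then `A ⊆ {|Y| ≥ |q|}`, and if `q ≥ 0` then
`{|Y| ≥ |q|}` contains `Aᶜ`, whose probability `1 − ε/2` is at least `ε/2`. -/

open MeasureTheory

lemma Real.mul_le_rpow_mul_rpow_of_rpow_mul_le {p r x a M : ℝ} (hpr : p.HolderConjugate r)
    (hx : 0 ≤ x) (ha : 0 ≤ a) (h : x ^ p * a ≤ M) :
    x * a ≤ M ^ (1 / p) * a ^ (1 / r) := by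
  have hsum : 1 / p + 1 / r = 1 := by rw [one_div, one_div, hpr.inv_add_inv_eq_one]
  have hsplit : x * a = (x ^ p * a) ^ (1 / p) * a ^ (1 / r) := by
    rw [Real.mul_rpow (by positivity) ha, mul_assoc,
      ← Real.rpow_add' ha (by rw [hsum]; exact one_ne_zero), hsum, Real.rpow_one, one_div,
      Real.rpow_rpow_inv hx hpr.ne_zero]
  rw [hsplit]
  gcongr
  exact one_div_nonneg.mpr hpr.nonneg

namespace MeasureTheory

variable {Ω : Type*} [MeasurableSpace Ω] {μ : Measure Ω} {Y : Ω → ℝ}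

lemma setIntegral_abs_le_integral_rpow_mul_measureReal [IsFiniteMeasure μ] {p r : ℝ}
    (hpr : p.HolderConjugate r) (hY : AEStronglyMeasurable Y μ)
    (hYp : Integrable (fun ω => |Y ω| ^ p) μ) (A : Set Ω) :
    ∫ ω in A, |Y ω| ∂μ ≤ (∫ ω, |Y ω| ^ p ∂μ) ^ (1 / p) * μ.real A ^ (1 / r) := by
  have hp : ENNReal.ofReal p ≠ 0 := by simpa using hpr.pos
  have hY_memLp : MemLp Y (ENNReal.ofReal p) μ := by
    rw [← memLp_norm_rpow_iff hY hp ENNReal.ofReal_ne_top,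
      ENNReal.div_self hp ENNReal.ofReal_ne_top, memLp_one_iff_integrable]
    simpa [ENNReal.toReal_ofReal hpr.nonneg] using hYp
  have holder := integral_mul_le_Lp_mul_Lq_of_nonneg hpr (μ := μ.restrict A)
    (ae_of_all _ fun ω => abs_nonneg (Y ω)) (ae_of_all _ fun _ => zero_le_one)
    (hY_memLp.norm.restrict A) (memLp_const (1 : ℝ))
  simp only [mul_one, Real.one_rpow, integral_const, smul_eq_mul, measureReal_restrict_apply_univ]
    at holder
  refine holder.trans ?_
  gcongr
  · exact one_div_nonneg.mpr hpr.nonneg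
  · exact ae_of_all _ fun _ => by positivity
  · exact Measure.restrict_le_self

lemma rpow_mul_measureReal_le_integral_rpow_abs [IsFiniteMeasure μ] {p c : ℝ} (hp : 0 ≤ p)
    (hYp : Integrable (fun ω => |Y ω| ^ p) μ) (hc : 0 ≤ c) {S : Set Ω}
    (hS : ∀ ω ∈ S, c ≤ |Y ω|) :
    c ^ p * μ.real S ≤ ∫ ω, |Y ω| ^ p ∂μ := by
  have hsub : S ⊆ {ω | c ^ p ≤ |Y ω| ^ p} := fun ω hω => Real.rpow_le_rpow hc (hS ω hω) hp
  calc c ^ p * μ.real S ≤ c ^ p * μ.real {ω | c ^ p ≤ |Y ω| ^ p} := by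
        gcongr
        exact measure_ne_top μ _
    _ ≤ ∫ ω, |Y ω| ^ p ∂μ :=
        mul_meas_ge_le_integral_of_nonneg (ae_of_all _ fun _ => by positivity) hYp _

lemma rpow_abs_mul_measureReal_le_integral_rpow_abs [IsProbabilityMeasure μ] {p q : ℝ}
    (hp : 0 ≤ p) (hY : Measurable Y) (hYp : Integrable (fun ω => |Y ω| ^ p) μ)
    (hq : μ.real {ω | Y ω ≤ q} ≤ 1 / 2) :
    |q| ^ p * μ.real {ω | Y ω ≤ q} ≤ ∫ ω, |Y ω| ^ p ∂μ := by
  rcases lt_or_ge q 0 with hneg | hnonneg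
  · refine rpow_mul_measureReal_le_integral_rpow_abs hp hYp (abs_nonneg q) fun ω hω => ?_
    rw [abs_of_neg hneg]
    exact (neg_le_neg hω).trans (neg_le_abs _)
  · have hcompl : μ.real {ω | Y ω ≤ q}ᶜ = 1 - μ.real {ω | Y ω ≤ q} :=
      probReal_compl_eq_one_sub (measurableSet_le hY measurable_const)
    have hupper := rpow_mul_measureReal_le_integral_rpow_abs hp hYp (abs_nonneg q)
      (S := {ω | Y ω ≤ q}ᶜ) fun ω hω => by
        rw [abs_of_nonneg hnonneg]
        exact (not_le.mp (show ¬Y ω ≤ q from hω)).le.trans (le_abs_self _)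
    calc |q| ^ p * μ.real {ω | Y ω ≤ q} ≤ |q| ^ p * μ.real {ω | Y ω ≤ q}ᶜ :=
        mul_le_mul_of_nonneg_left (by linarith) (by positivity)
      _ ≤ _ := hupper

lemma setIntegral_abs_sub_le_two_mul_integral_rpow_abs [IsProbabilityMeasure μ] {p r q : ℝ}
    (hpr : p.HolderConjugate r) (hY : Measurable Y) (hYint : Integrable Y μ)
    (hYp : Integrable (fun ω => |Y ω| ^ p) μ) (hq : μ.real {ω | Y ω ≤ q} ≤ 1 / 2) :
    ∫ ω in {ω | Y ω ≤ q}, |Y ω - q| ∂μ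
      ≤ 2 * (∫ ω, |Y ω| ^ p ∂μ) ^ (1 / p) * μ.real {ω | Y ω ≤ q} ^ (1 / r) := by
  set A := {ω | Y ω ≤ q}
  calc ∫ ω in A, |Y ω - q| ∂μ ≤ ∫ ω in A, (|Y ω| + |q|) ∂μ :=
        setIntegral_mono (hYint.sub (integrable_const q)).abs.integrableOn
          (hYint.abs.add (integrable_const |q|)).integrableOn fun ω => abs_sub (Y ω) q
    _ = ∫ ω in A, |Y ω| ∂μ + |q| * μ.real A := by
        rw [integral_add hYint.abs.integrableOn (integrable_const _).integrableOn,
          setIntegral_const, smul_eq_mul, mul_comm]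
    _ ≤ (∫ ω, |Y ω| ^ p ∂μ) ^ (1 / p) * μ.real A ^ (1 / r)
          + (∫ ω, |Y ω| ^ p ∂μ) ^ (1 / p) * μ.real A ^ (1 / r) :=
        add_le_add
          (setIntegral_abs_le_integral_rpow_mul_measureReal hpr hY.aestronglyMeasurable hYp A)
          (Real.mul_le_rpow_mul_rpow_of_rpow_mul_le hpr (abs_nonneg q) measureReal_nonneg
            (rpow_abs_mul_measureReal_le_integral_rpow_abs hpr.nonneg hY hYp hq))
    _ = _ := by ring

end MeasureTheory

/-- Lower-tail clipped first-moment bound for the trimmed-mean analysis: if `X̄ = X − E X` has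
centered `(1+γ)`-moment `M < ∞` with `γ ∈ (0,1]`, and `q` is the `ε/2`-quantile of `X̄`
(in the sense `P(X̄ ≤ q) = ε/2`), then for `ε ∈ (0,1)`,
`E[|X̄ − q| 1{X̄ ≤ q}] ≤ 2 M^{1/(1+γ)} (ε/2)^{γ/(1+γ)}`. -/
theorem quantile_clipped_first_moment {Ω : Type*} [MeasurableSpace Ω] (μ : Measure Ω)
    [IsProbabilityMeasure μ] (X : Ω → ℝ) (hX : Measurable X) (hint : Integrable X μ)
    (γ M : ℝ) (hγ : γ ∈ Set.Ioc (0 : ℝ) 1)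
    (hmom : Integrable (fun ω => |X ω - ∫ ω', X ω' ∂μ| ^ (1 + γ)) μ)
    (hM : ∫ ω, |X ω - ∫ ω', X ω' ∂μ| ^ (1 + γ) ∂μ = M)
    (ε q : ℝ) (hε : ε ∈ Set.Ioo (0 : ℝ) 1)
    (hq : (μ {ω | X ω - ∫ ω', X ω' ∂μ ≤ q}).toReal = ε / 2) :
    (∫ ω in {ω | X ω - ∫ ω', X ω' ∂μ ≤ q}, |X ω - ∫ ω', X ω' ∂μ - q| ∂μ)
      ≤ 2 * M ^ (1 / (1 + γ)) * (ε / 2) ^ (γ / (1 + γ)) := by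
  have hpr : (1 + γ).HolderConjugate ((1 + γ) / γ) := by
    rw [Real.holderConjugate_iff, inv_div]
    have hγ0 := hγ.1
    exact ⟨by linarith, by field_simp⟩
  have hA : μ.real {ω | X ω - ∫ ω', X ω' ∂μ ≤ q} = ε / 2 := hq
  have key := setIntegral_abs_sub_le_two_mul_integral_rpow_abs
    (Y := fun ω => X ω - ∫ ω', X ω' ∂μ) hpr (hX.sub measurable_const)
    (hint.sub (integrable_const _)) hmom (q := q) (by linarith [hε.2])
  rwa [hA, hM, one_div_div] at key
end

section
/- Let R: ℝ^d → ℝ be λ-strongly convex and L-smooth, with minimizer θ*. Consider noisy randomized coordinate descent: θ^{(t+1)} = θ^{(t)} − β ĝ_{j_t}(θ^{(t)}) e_{j_t} with constant step β = 2/(λ+L), j_t uniform on {1,…,d}, and estimators satisfying |ĝ_j(θ) − ∂_j R(θ)| ≤ ε_j uniformly on the iterates. Then E‖θ^{(T)} − θ*‖₂ ≤ ‖θ^{(0)} − θ*‖₂ (1 − 2βλL/(d(λ+L)))^{T/2} + (√d (λ+L)/(λL)) (∑_j ε_j²)^{1/2}, where the expectation is over the coordinate sampling. (Equivalently, the L²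 error contracts with factor κ = (1 − 2βλL/(d(λ+L)))^{1/2} per step up to additive noise β‖ε‖₂/√d.) -/
/-!
Nesterov's coercivity inequality `⟪∇R θ, θ - θ*⟫ ≥ λL/(λ+L) ‖θ - θ*‖² + 1/(λ+L) ‖∇R θ‖²` is the
co-coercivity of the convex, `(L - λ)`-smooth function `R - λ/2 ‖·‖²`; its quadratic upper bound
comes from summing the subgradient inequality along a finely subdivided segment.

Averaged over the coordinate `j`, the exact step `θ - β ∂ⱼR(θ) eⱼ` has squared error
`‖θ - θ*‖² - (2β/d) ⟪∇R θ, θ - θ*⟫ + (β²/d) ‖∇R θ‖²`, which coercivity bounds by `κ² ‖θ - θ*‖²`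
for `β = 2/(λ+L)`; the estimator moves the step by at most `β ε_j`, and Cauchy–Schwarz turns the
mean of the norms into `κ ‖θ - θ*‖`. The iterate at time `t` does not depend on `j_t`, so the
expected error obeys `e_{t+1} ≤ κ e_t + β ∑ ε_j / d`; unrolling, and using
`1 - κ ≥ (1 - κ²)/2 = 2βλL/(d(λ+L))`, gives the bound.
-/

open Finset Function Filter Topology RealInnerProductSpace

section Subgradient

variable {E : Type*} [NormedAddCommGroup E] [InnerProductSpace ℝ E] {f : E → ℝ} {g : E → E}

theorem le_add_nsmul_of_subgradient (hconv : ∀ x y, f x + ⟪g x, y - x⟫ ≤ f y) {L : ℝ}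
    (hg : ∀ x y, ‖g x - g y‖ ≤ L * ‖x - y‖) (x h : E) (k : ℕ) :
    f (x + (k : ℝ) • h) ≤ f x + k * ⟪g x, h⟫ + L * (k * (k + 1) / 2) * ‖h‖ ^ 2 := by
  induction k with
  | zero => simp
  | succ k ih =>
    set p := x + (k : ℝ) • h
    have hq : x + ((k + 1 : ℕ) : ℝ) • h = p + h := by
      simp only [p, Nat.cast_succ, add_smul, one_smul, add_assoc]
    -- the subgradient inequality at `p + h` gives `f (p + h) - f p ≤ ⟪g (p + h), h⟫`
    have hinc := hconv (p + h) p
    have hgrad : ⟪g (p + h) - g x, h⟫ ≤ L * (k + 1) * ‖h‖ ^ 2 := by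
      calc ⟪g (p + h) - g x, h⟫ ≤ ‖g (p + h) - g x‖ * ‖h‖ := real_inner_le_norm _ _
        _ ≤ L * ‖p + h - x‖ * ‖h‖ := by gcongr; exact hg _ _
        _ = L * (k + 1) * ‖h‖ ^ 2 := by
          rw [show p + h - x = ((k : ℝ) + 1) • h by simp only [p]; module, norm_smul,
            Real.norm_of_nonneg (by positivity)]
          ring
    rw [hq]
    simp only [sub_add_cancel_left, inner_neg_right, inner_sub_left] at hinc hgrad
    push_cast
    nlinarith

theorem le_add_inner_add_sq_of_subgradient (hconv : ∀ x y, f x + ⟪g x, y - x⟫ ≤ f y) {L : ℝ}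
    (hg : ∀ x y, ‖g x - g y‖ ≤ L * ‖x - y‖) (x y : E) :
    f y ≤ f x + ⟪g x, y - x⟫ + L / 2 * ‖y - x‖ ^ 2 := by
  set B := f x + ⟪g x, y - x⟫ + L / 2 * ‖y - x‖ ^ 2
  have hlim : Tendsto (fun n : ℕ => B + L / 2 * ‖y - x‖ ^ 2 * (1 / (n : ℝ))) atTop (𝓝 B) := by
    simpa using (tendsto_one_div_atTop_nhds_zero_nat.const_mul (L / 2 * ‖y - x‖ ^ 2)).const_add B
  refine ge_of_tendsto hlim (eventually_atTop.2 ⟨1, fun n hn => ?_⟩)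
  have hn : (0 : ℝ) < n := by exact_mod_cast hn
  have h := le_add_nsmul_of_subgradient hconv hg x ((n : ℝ)⁻¹ • (y - x)) n
  rw [smul_smul, mul_inv_cancel₀ hn.ne', one_smul, add_sub_cancel, inner_smul_right,
    norm_smul, mul_pow, norm_inv, Real.norm_of_nonneg hn.le] at h
  refine h.trans_eq ?_
  simp only [B]
  field_simp
  ring

theorem add_inner_add_sq_div_le_of_subgradient (hconv : ∀ x y, f x + ⟪g x, y - x⟫ ≤ f y)
    {M : ℝ} (hM : 0 < M) (hdesc : ∀ x y, f y ≤ f x + ⟪g x, y - x⟫ + M / 2 * ‖y - x‖ ^ 2)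
    (x y : E) :
    f x + ⟪g x, y - x⟫ + ‖g y - g x‖ ^ 2 / (2 * M) ≤ f y := by
  -- compare `f x` with the value at the gradient step `z` taken from `y`
  set z := y - M⁻¹ • (g y - g x)
  have h1 := hconv x z
  have h2 := hdesc y z
  have hz : z - x = (y - x) - M⁻¹ • (g y - g x) := by simp only [z]; abel
  rw [hz, inner_sub_right, inner_smul_right] at h1
  rw [show z - y = -(M⁻¹ • (g y - g x)) by simp only [z]; abel, inner_neg_right,
    inner_smul_right, norm_neg, norm_smul, mul_pow, norm_inv, Real.norm_of_nonneg hM.le] at h2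
  have hD : ⟪g y, g y - g x⟫ - ⟪g x, g y - g x⟫ = ‖g y - g x‖ ^ 2 := by
    rw [← inner_sub_left, real_inner_self_eq_norm_sq]
  have hM' : M / 2 * (M⁻¹ ^ 2 * ‖g y - g x‖ ^ 2) = ‖g y - g x‖ ^ 2 / (2 * M) := by
    field_simp
  have hM'' : M⁻¹ * ⟪g y, g y - g x⟫ - M⁻¹ * ⟪g x, g y - g x⟫
      = 2 * (‖g y - g x‖ ^ 2 / (2 * M)) := by
    rw [← mul_sub, hD]; field_simp
  linarith

theorem norm_sub_sq_le_mul_inner_of_subgradient (hconv : ∀ x y, f x + ⟪g x, y - x⟫ ≤ f y)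
    {M : ℝ} (hM : 0 < M) (hdesc : ∀ x y, f y ≤ f x + ⟪g x, y - x⟫ + M / 2 * ‖y - x‖ ^ 2)
    (x y : E) :
    ‖g x - g y‖ ^ 2 ≤ M * ⟪g x - g y, x - y⟫ := by
  have hxy := add_inner_add_sq_div_le_of_subgradient hconv hM hdesc x y
  have hyx := add_inner_add_sq_div_le_of_subgradient hconv hM hdesc y x
  rw [norm_sub_rev (g y)] at hxy
  have hsum : ‖g x - g y‖ ^ 2 / M ≤ ⟪g x - g y, x - y⟫ := by
    have h2M : ‖g x - g y‖ ^ 2 / M = 2 * (‖g x - g y‖ ^ 2 / (2 * M)) := by field_simp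
    simp only [inner_sub_left, inner_sub_right] at hxy hyx ⊢
    linarith
  rwa [div_le_iff₀' hM] at hsum

theorem coercive_of_strongConvex_of_lipschitz {μ L : ℝ} (hμ : 0 ≤ μ) (hL : 0 ≤ L)
    (hSC : ∀ x y, f x + ⟪g x, y - x⟫ + μ / 2 * ‖y - x‖ ^ 2 ≤ f y)
    (hg : ∀ x y, ‖g x - g y‖ ≤ L * ‖x - y‖) (x y : E) :
    μ * L * ‖x - y‖ ^ 2 + ‖g x - g y‖ ^ 2 ≤ (μ + L) * ⟪g x - g y, x - y⟫ := by
  have hmono : μ * ‖x - y‖ ^ 2 ≤ ⟪g x - g y, x - y⟫ := by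
    have h1 := hSC x y
    have h2 := hSC y x
    rw [norm_sub_rev y x] at h1
    simp only [inner_sub_left, inner_sub_right] at h1 h2 ⊢
    linarith
  rcases le_or_gt L μ with hLμ | hμL
  · have hsq : ‖g x - g y‖ ^ 2 ≤ (L * ‖x - y‖) ^ 2 :=
      pow_le_pow_left₀ (norm_nonneg _) (hg x y) 2
    have hsum : 0 ≤ μ + L := by positivity
    nlinarith [mul_le_mul_of_nonneg_left hmono hsum,
      mul_nonneg (mul_nonneg (sub_nonneg.2 hLμ) hsum) (sq_nonneg ‖x - y‖)]
  · -- `f - μ/2 ‖·‖²` is convex with gradient `g - μ • id` and `(L - μ)`-smooth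
    have hpyth : ∀ x y : E, ‖y‖ ^ 2 = ‖x‖ ^ 2 + 2 * ⟪x, y - x⟫ + ‖y - x‖ ^ 2 := fun x y => by
      rw [← norm_add_sq_real, add_sub_cancel]
    have hconv : ∀ x y, (f x - μ / 2 * ‖x‖ ^ 2) + ⟪g x - μ • x, y - x⟫
        ≤ f y - μ / 2 * ‖y‖ ^ 2 := fun x y => by
      rw [hpyth x y, inner_sub_left, real_inner_smul_left]
      linarith [hSC x y]
    have hdesc : ∀ x y, f y - μ / 2 * ‖y‖ ^ 2 ≤ (f x - μ / 2 * ‖x‖ ^ 2)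
        + ⟪g x - μ • x, y - x⟫ + (L - μ) / 2 * ‖y - x‖ ^ 2 := fun x y => by
      have h := le_add_inner_add_sq_of_subgradient
        (fun x y => (le_add_of_nonneg_right (by positivity)).trans (hSC x y)) hg x y
      rw [hpyth x y, inner_sub_left, real_inner_smul_left]
      linarith
    have hco := norm_sub_sq_le_mul_inner_of_subgradient hconv (sub_pos.2 hμL) hdesc x y
    rw [show g x - μ • x - (g y - μ • y) = (g x - g y) - μ • (x - y) by module] at hco
    generalize g x - g y = u at hco ⊢
    rw [norm_sub_sq_real, real_inner_smul_right, norm_smul, mul_pow, inner_sub_left,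
      real_inner_smul_left, real_inner_self_eq_norm_sq, Real.norm_of_nonneg hμ] at hco
    nlinarith

end Subgradient

/-- With step `β = 2 / (μ + L)`, a step along a uniformly random coordinate of `ℝⁿ` contracts the
mean squared error by the factor `1 - coordinateDescentRate μ L n = 1 - 2βμL / (n (μ + L))`. -/
noncomputable def coordinateDescentRate (μ L n : ℝ) : ℝ := 2 * (2 / (μ + L)) * μ * L / (n * (μ + L))

theorem coordinateDescentRate_pos {μ L n : ℝ} (hμ : 0 < μ) (hL : 0 < L) (hn : 0 < n) :
    0 < coordinateDescentRate μ L n := by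
  unfold coordinateDescentRate; positivity

theorem coordinateDescentRate_le_one {μ L n : ℝ} (hμ : 0 < μ) (hL : 0 < L) (hn : 1 ≤ n) :
    coordinateDescentRate μ L n ≤ 1 := by
  unfold coordinateDescentRate
  rw [div_le_one (by positivity), ← sub_nonneg]
  have : n * (μ + L) - 2 * (2 / (μ + L)) * μ * L
      = ((n - 1) * (μ + L) ^ 2 + (μ - L) ^ 2) / (μ + L) := by
    field_simp; ring
  rw [this]
  have : 0 ≤ n - 1 := by linarith
  positivity

theorem half_le_one_sub_sqrt_one_sub {a : ℝ} (ha : a ≤ 2) : a / 2 ≤ 1 - √(1 - a) := by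
  have : √(1 - a) ≤ 1 - a / 2 :=
    Real.sqrt_le_iff.2 ⟨by linarith, by nlinarith [sq_nonneg a]⟩
  linarith

theorem sqrt_one_sub_coordinateDescentRate_lt_one {μ L n : ℝ} (hμ : 0 < μ) (hL : 0 < L)
    (hn : 0 < n) : √(1 - coordinateDescentRate μ L n) < 1 :=
  (Real.sqrt_lt' one_pos).2 (by linarith [coordinateDescentRate_pos hμ hL hn])

theorem div_one_sub_sqrt_one_sub_coordinateDescentRate_le {μ L n S : ℝ} (hμ : 0 < μ)
    (hL : 0 < L) (hn : 1 ≤ n) (hS : 0 ≤ S) :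
    2 / (μ + L) * S / n / (1 - √(1 - coordinateDescentRate μ L n))
      ≤ (μ + L) / (μ * L) * S := by
  have hr := coordinateDescentRate_pos hμ hL (by linarith : 0 < n)
  calc 2 / (μ + L) * S / n / (1 - √(1 - coordinateDescentRate μ L n))
      ≤ 2 / (μ + L) * S / n / (coordinateDescentRate μ L n / 2) := by
        gcongr
        exact half_le_one_sub_sqrt_one_sub (by linarith [coordinateDescentRate_le_one hμ hL hn])
    _ = (μ + L) / (μ * L) * S := by
        unfold coordinateDescentRate
        field_simp

section CoordinateStep

variable {ι : Type*} [Fintype ι]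

theorem sum_le_sqrt_card_mul_sqrt_sum_sq (a : ι → ℝ) :
    ∑ j, a j ≤ √(Fintype.card ι) * √(∑ j, a j ^ 2) := by
  simpa using Real.sum_mul_le_sqrt_mul_sqrt univ (fun _ => (1 : ℝ)) a

variable [DecidableEq ι]

theorem sum_norm_sub_single_sq (v a : EuclideanSpace ℝ ι) :
    ∑ j, ‖v - EuclideanSpace.single j (a j)‖ ^ 2
      = Fintype.card ι * ‖v‖ ^ 2 - 2 * ⟪a, v⟫ + ‖a‖ ^ 2 := by
  simp only [norm_sub_sq_real, PiLp.norm_single,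
    Real.norm_eq_abs, sq_abs, sum_add_distrib, sum_sub_distrib, sum_const, card_univ,
    nsmul_eq_mul, ← mul_sum, EuclideanSpace.real_norm_sq_eq a, PiLp.inner_apply]
  simp [mul_comm]

theorem sum_norm_sub_single_sq_le_of_coercive {μ L : ℝ} (hμL : 0 < μ + L)
    (v u : EuclideanSpace ℝ ι) (hcoerc : μ * L * ‖v‖ ^ 2 + ‖u‖ ^ 2 ≤ (μ + L) * ⟪u, v⟫) :
    ∑ j, ‖v - EuclideanSpace.single j (2 / (μ + L) * u j)‖ ^ 2
      ≤ (Fintype.card ι - 2 * (2 / (μ + L)) * μ * L / (μ + L)) * ‖v‖ ^ 2 := by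
  have h := sum_norm_sub_single_sq v ((2 / (μ + L)) • u)
  simp only [PiLp.smul_apply, smul_eq_mul, real_inner_smul_left, norm_smul, mul_pow,
    Real.norm_of_nonneg (by positivity : 0 ≤ 2 / (μ + L))] at h
  rw [h]
  have key : (2 / (μ + L)) ^ 2 * ‖u‖ ^ 2 - 2 * (2 / (μ + L) * ⟪u, v⟫)
      ≤ - (2 * (2 / (μ + L)) * μ * L / (μ + L)) * ‖v‖ ^ 2 := by
    rw [← sub_nonneg]
    have : - (2 * (2 / (μ + L)) * μ * L / (μ + L)) * ‖v‖ ^ 2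
        - ((2 / (μ + L)) ^ 2 * ‖u‖ ^ 2 - 2 * (2 / (μ + L) * ⟪u, v⟫))
        = 4 / (μ + L) ^ 2 * ((μ + L) * ⟪u, v⟫ - (μ * L * ‖v‖ ^ 2 + ‖u‖ ^ 2)) := by
      field_simp
      ring
    rw [this]
    exact mul_nonneg (by positivity) (sub_nonneg.2 hcoerc)
  linarith

theorem sum_norm_sub_single_le_of_coercive [Nonempty ι] {μ L : ℝ} (hμ : 0 < μ) (hL : 0 < L)
    (v u û : EuclideanSpace ℝ ι) (ε : ι → ℝ) (hû : ∀ j, |û j - u j| ≤ ε j)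
    (hcoerc : μ * L * ‖v‖ ^ 2 + ‖u‖ ^ 2 ≤ (μ + L) * ⟪u, v⟫) :
    ∑ j, ‖v - EuclideanSpace.single j (2 / (μ + L) * û j)‖
      ≤ Fintype.card ι * √(1 - coordinateDescentRate μ L (Fintype.card ι)) * ‖v‖
        + 2 / (μ + L) * ∑ j, ε j := by
  set β := 2 / (μ + L)
  set n : ℝ := (Fintype.card ι : ℝ)
  have hn : 0 < n := by simp only [n]; exact_mod_cast Fintype.card_pos
  have hβ : 0 < β := by positivity
  have hnoise : ∀ j, ‖v - EuclideanSpace.single j (β * û j)‖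
      ≤ ‖v - EuclideanSpace.single j (β * u j)‖ + β * ε j := fun j => by
    refine (norm_le_norm_add_norm_sub' _ (v - EuclideanSpace.single j (β * u j))).trans ?_
    rw [sub_sub_sub_cancel_left, ← PiLp.single_sub, PiLp.norm_single, ← mul_sub,
      norm_mul, Real.norm_of_nonneg hβ.le, Real.norm_eq_abs, abs_sub_comm]
    gcongr
    exact hû j
  have hexact : ∑ j, ‖v - EuclideanSpace.single j (β * u j)‖
      ≤ n * √(1 - coordinateDescentRate μ L n) * ‖v‖ := by
    refine (sum_le_sqrt_card_mul_sqrt_sum_sq _).trans ?_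
    grw [sum_norm_sub_single_sq_le_of_coercive (by positivity) v u hcoerc]
    rw [Real.sqrt_mul' _ (sq_nonneg _), Real.sqrt_sq (norm_nonneg _), ← mul_assoc,
      ← Real.sqrt_mul hn.le]
    have hfactor : n * (n - 2 * β * μ * L / (μ + L))
        = n ^ 2 * (1 - coordinateDescentRate μ L n) := by
      simp only [coordinateDescentRate, β]
      field_simp
    rw [hfactor, Real.sqrt_mul (sq_nonneg n), Real.sqrt_sq hn.le]
  calc ∑ j, ‖v - EuclideanSpace.single j (β * û j)‖
      ≤ ∑ j, (‖v - EuclideanSpace.single j (β * u j)‖ + β * ε j) :=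
        sum_le_sum fun j _ => hnoise j
    _ ≤ _ := by rw [sum_add_distrib, ← mul_sum]; gcongr

end CoordinateStep

theorem card_nsmul_sum_apply_eq_sum_sum {ι α β M : Type*} [Fintype ι] [DecidableEq ι]
    [Fintype α] [AddCommMonoid M] (i : ι) (Φ : (ι → α) → β)
    (hΦ : ∀ js a, Φ (update js i a) = Φ js) (F : α → β → M) :
    Fintype.card α • ∑ js, F (js i) (Φ js) = ∑ js, ∑ a, F a (Φ js) := by
  -- resampling the `i`-th coordinate is an involution of `α × (ι → α)`
  have hσ : Involutive fun p : α × (ι → α) => (p.2 i, update p.2 i p.1) := fun p => by simp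
  calc Fintype.card α • ∑ js, F (js i) (Φ js) = ∑ p : α × (ι → α), F (p.2 i) (Φ p.2) := by
        simp only [Fintype.sum_prod_type, sum_const, card_univ]
    _ = ∑ p : α × (ι → α), F p.1 (Φ p.2) :=
        Fintype.sum_bijective _ hσ.bijective _ _ fun p => by simp [hΦ]
    _ = ∑ js, ∑ a, F a (Φ js) := by rw [Fintype.sum_prod_type, sum_comm]

theorem le_pow_mul_add_div_of_le_mul_add {a : ℕ → ℝ} {κ b : ℝ} {T : ℕ} (hκ₀ : 0 ≤ κ)
    (hκ₁ : κ < 1) (hb : 0 ≤ b) (h : ∀ t < T, a (t + 1) ≤ κ * a t + b) :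
    a T ≤ κ ^ T * a 0 + b / (1 - κ) := by
  have hgap : 0 < 1 - κ := sub_pos.2 hκ₁
  suffices ∀ t ≤ T, a t ≤ κ ^ t * a 0 + b / (1 - κ) from this T le_rfl
  intro t
  induction t with
  | zero => intro; simpa using div_nonneg hb hgap.le
  | succ t ih =>
    intro ht
    have hfix : κ * (b / (1 - κ)) + b = b / (1 - κ) := by field_simp; ring
    calc a (t + 1) ≤ κ * a t + b := h t ht
      _ ≤ κ * (κ ^ t * a 0 + b / (1 - κ)) + b := by gcongr; exact ih (by omega)
      _ = κ ^ (t + 1) * a 0 + b / (1 - κ) := by rw [pow_succ]; linarith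

section RandomIteration

variable {α X : Type*} {T : ℕ} {x : (Fin T → α) → ℕ → X}
  {F : α → X → X} {x₀ : X}

theorem iterate_eq_of_forall_lt (hinit : ∀ js, x js 0 = x₀)
    (hstep : ∀ js (t : Fin T), x js (t + 1) = F (js t) (x js t)) {t : ℕ} (ht : t ≤ T)
    {js js' : Fin T → α} (h : ∀ s : Fin T, (s : ℕ) < t → js s = js' s) :
    x js t = x js' t := by
  induction t with
  | zero => rw [hinit, hinit]
  | succ t ih =>
    have ht' : t < T := ht
    rw [hstep js ⟨t, ht'⟩, hstep js' ⟨t, ht'⟩, ih ht'.le fun s hs => h s (by omega),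
      h ⟨t, ht'⟩ (by simp)]

theorem average_iterate_succ_le [Fintype α] [DecidableEq α] [Nonempty α] (hinit : ∀ js, x js 0 = x₀)
    (hstep : ∀ js (t : Fin T), x js (t + 1) = F (js t) (x js t)) (V : X → ℝ) {κ b : ℝ}
    (hV : ∀ y, ∑ a, V (F a y) ≤ Fintype.card α * κ * V y + b) {t : ℕ} (ht : t < T) :
    1 / (Fintype.card α : ℝ) ^ T * ∑ js, V (x js (t + 1))
      ≤ κ * (1 / (Fintype.card α : ℝ) ^ T * ∑ js, V (x js t)) + b / Fintype.card α := by
  have hresample := card_nsmul_sum_apply_eq_sum_sum (⟨t, ht⟩ : Fin T) (fun js => x js t)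
    (fun js a => iterate_eq_of_forall_lt hinit hstep ht.le fun s hs =>
      update_of_ne (Fin.ne_of_val_ne hs.ne) _ _) (fun a y => V (F a y))
  simp only [← hstep, nsmul_eq_mul] at hresample
  have hsum : Fintype.card α * ∑ js, V (x js (t + 1))
      ≤ Fintype.card α * κ * ∑ js, V (x js t) + (Fintype.card α : ℝ) ^ T * b := by
    rw [hresample]
    refine (sum_le_sum fun js _ => hV (x js t)).trans_eq ?_
    simp [sum_add_distrib, mul_sum]
  field_simp
  linarith

theorem average_iterate_le [Fintype α] [DecidableEq α] [Nonempty α] (hinit : ∀ js, x js 0 = x₀)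
    (hstep : ∀ js (t : Fin T), x js (t + 1) = F (js t) (x js t)) (V : X → ℝ) {κ b : ℝ}
    (hκ₀ : 0 ≤ κ) (hκ₁ : κ < 1) (hb : 0 ≤ b)
    (hV : ∀ y, ∑ a, V (F a y) ≤ Fintype.card α * κ * V y + b) :
    1 / (Fintype.card α : ℝ) ^ T * ∑ js, V (x js T)
      ≤ κ ^ T * V x₀ + b / Fintype.card α / (1 - κ) := by
  have hstart : 1 / (Fintype.card α : ℝ) ^ T * ∑ js : Fin T → α, V (x js 0) = V x₀ := by
    simp [hinit]
  rw [← hstart]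
  exact le_pow_mul_add_div_of_le_mul_add
    (a := fun t => 1 / (Fintype.card α : ℝ) ^ T * ∑ js, V (x js t)) hκ₀ hκ₁ (by positivity)
    fun t ht => average_iterate_succ_le hinit hstep V hV ht

end RandomIteration

section EuclideanCoordinates

variable {ι : Type*}

theorem toLp_update_sub_eq_sub_single [DecidableEq ι] (θ : ι → ℝ) (j : ι) (a : ℝ) :
    WithLp.toLp 2 (update θ j (θ j - a)) = WithLp.toLp 2 θ - EuclideanSpace.single j a := by
  ext i
  rcases eq_or_ne i j with rfl | h <;> simp [*]

variable [Fintype ι]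

theorem sqrt_sum_sq_sub_eq_norm_toLp_sub (x y : ι → ℝ) :
    √(∑ j, (x j - y j) ^ 2) = ‖WithLp.toLp 2 x - WithLp.toLp 2 y‖ := by
  simp [EuclideanSpace.norm_eq, sq_abs]

variable {R : (ι → ℝ) → ℝ} {g : ι → (ι → ℝ) → ℝ} {μ L : ℝ} {θstar : ι → ℝ}

theorem toLp_coercive_of_coordinates (hμ : 0 ≤ μ) (hL : 0 ≤ L)
    (hSC : ∀ θ₁ θ₂ : ι → ℝ,
      R θ₁ + (∑ j, g j θ₁ * (θ₂ j - θ₁ j)) + μ / 2 * ∑ j, (θ₂ j - θ₁ j) ^ 2 ≤ R θ₂)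
    (hLip : ∀ θ₁ θ₂ : ι → ℝ,
      √(∑ j, (g j θ₁ - g j θ₂) ^ 2) ≤ L * √(∑ j, (θ₁ j - θ₂ j) ^ 2))
    (hgrad0 : ∀ j, g j θstar = 0) (θ : ι → ℝ) :
    μ * L * ‖WithLp.toLp 2 θ - WithLp.toLp 2 θstar‖ ^ 2 + ‖WithLp.toLp 2 fun j => g j θ‖ ^ 2
      ≤ (μ + L) * ⟪WithLp.toLp 2 fun j => g j θ, WithLp.toLp 2 θ - WithLp.toLp 2 θstar⟫ := by
  let G : EuclideanSpace ℝ ι → EuclideanSpace ℝ ι := fun x => WithLp.toLp 2 fun j => g j x.ofLp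
  have hGstar : G (WithLp.toLp 2 θstar) = 0 := by ext j; simp [G, hgrad0]
  simpa [hGstar] using coercive_of_strongConvex_of_lipschitz (f := fun x => R x.ofLp) (g := G)
    hμ hL
    (fun x y => by
      simpa [G, PiLp.inner_apply, EuclideanSpace.real_norm_sq_eq, mul_comm] using
        hSC x.ofLp y.ofLp)
    (fun x y => by simpa [sqrt_sum_sq_sub_eq_norm_toLp_sub] using hLip x.ofLp y.ofLp)
    (WithLp.toLp 2 θ) (WithLp.toLp 2 θstar)

theorem sum_norm_update_sub_le [DecidableEq ι] [Nonempty ι] (hμ : 0 < μ) (hL : 0 < L)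
    (hSC : ∀ θ₁ θ₂ : ι → ℝ,
      R θ₁ + (∑ j, g j θ₁ * (θ₂ j - θ₁ j)) + μ / 2 * ∑ j, (θ₂ j - θ₁ j) ^ 2 ≤ R θ₂)
    (hLip : ∀ θ₁ θ₂ : ι → ℝ,
      √(∑ j, (g j θ₁ - g j θ₂) ^ 2) ≤ L * √(∑ j, (θ₁ j - θ₂ j) ^ 2))
    (hgrad0 : ∀ j, g j θstar = 0) {θ ĝ ε : ι → ℝ} (hĝ : ∀ j, |ĝ j - g j θ| ≤ ε j) :
    ∑ j, ‖WithLp.toLp 2 (update θ j (θ j - 2 / (μ + L) * ĝ j)) - WithLp.toLp 2 θstar‖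
      ≤ Fintype.card ι * √(1 - coordinateDescentRate μ L (Fintype.card ι))
          * ‖WithLp.toLp 2 θ - WithLp.toLp 2 θstar‖ + 2 / (μ + L) * ∑ j, ε j := by
  simp only [toLp_update_sub_eq_sub_single, sub_right_comm _ (EuclideanSpace.single _ _)]
  exact sum_norm_sub_single_le_of_coercive hμ hL _ _ (WithLp.toLp 2 ĝ) ε hĝ
    (toLp_coercive_of_coordinates hμ.le hL.le hSC hLip hgrad0 θ)

end EuclideanCoordinates

theorem cgd_parameter_error_contraction_general (d T : ℕ) (hd : 0 < d)
    (R : (Fin d → ℝ) → ℝ) (g : Fin d → (Fin d → ℝ) → ℝ)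
    (lam Lc : ℝ) (hlam : 0 < lam) (hLc : 0 < Lc)
    (hSC : ∀ θ₁ θ₂ : Fin d → ℝ,
      R θ₁ + (∑ j, g j θ₁ * (θ₂ j - θ₁ j)) + lam / 2 * ∑ j, (θ₂ j - θ₁ j) ^ 2 ≤ R θ₂)
    (hLip : ∀ θ₁ θ₂ : Fin d → ℝ,
      Real.sqrt (∑ j, (g j θ₁ - g j θ₂) ^ 2) ≤ Lc * Real.sqrt (∑ j, (θ₁ j - θ₂ j) ^ 2))
    (θstar : Fin d → ℝ) (hgrad0 : ∀ j, g j θstar = 0)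
    (gh : Fin d → (Fin d → ℝ) → ℝ) (ε : Fin d → ℝ)
    (hest : ∀ (θ : Fin d → ℝ) (j : Fin d), |gh j θ - g j θ| ≤ ε j)
    (θ0 : Fin d → ℝ)
    (θiter : (Fin T → Fin d) → ℕ → (Fin d → ℝ))
    (hinit : ∀ js, θiter js 0 = θ0)
    (hstep : ∀ (js : Fin T → Fin d) (t : Fin T),
      θiter js (t.1 + 1) = Function.update (θiter js t.1) (js t)
        (θiter js t.1 (js t) - (2 / (lam + Lc)) * gh (js t) (θiter js t.1))) :
    (1 / (d : ℝ) ^ T) * ∑ js : Fin T → Fin d,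
        Real.sqrt (∑ j, (θiter js T j - θstar j) ^ 2)
      ≤ Real.sqrt (∑ j, (θ0 j - θstar j) ^ 2)
          * (1 - 2 * (2 / (lam + Lc)) * lam * Lc / ((d : ℝ) * (lam + Lc))) ^ ((T : ℝ) / 2)
        + Real.sqrt d * (lam + Lc) / (lam * Lc) * Real.sqrt (∑ j, ε j ^ 2) := by
  have : Nonempty (Fin d) := ⟨⟨0, hd⟩⟩
  have hd₁ : (1 : ℝ) ≤ d := by exact_mod_cast hd
  have hε : 0 ≤ ∑ j, ε j := sum_nonneg fun j _ => (abs_nonneg _).trans (hest θ0 j)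
  have hT := average_iterate_le hinit hstep (fun θ => ‖WithLp.toLp 2 θ - WithLp.toLp 2 θstar‖)
    (Real.sqrt_nonneg _) (sqrt_one_sub_coordinateDescentRate_lt_one hlam hLc (by simpa using hd))
    (by positivity) fun θ => sum_norm_update_sub_le hlam hLc hSC hLip hgrad0 (hest θ)
  have hnoise := div_one_sub_sqrt_one_sub_coordinateDescentRate_le hlam hLc hd₁ hε
  have hCS := mul_le_mul_of_nonneg_left (sum_le_sqrt_card_mul_sqrt_sum_sq ε)
    (by positivity : 0 ≤ (lam + Lc) / (lam * Lc))
  simp only [Fintype.card_fin] at hT hCS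
  change _ ≤ _ * (1 - coordinateDescentRate lam Lc d) ^ ((T : ℝ) / 2) + _
  rw [Real.rpow_div_two_eq_sqrt _ (sub_nonneg.2 (coordinateDescentRate_le_one hlam hLc hd₁)),
    Real.rpow_natCast]
  simp only [sqrt_sum_sq_sub_eq_norm_toLp_sub]
  rw [mul_div_assoc]
  linarith

/-- Parameter-error contraction for noisy randomized coordinate descent under strong convexity
and smoothness: `R : ℝ^d → ℝ` is `lam`-strongly convex and `Lc`-smooth (its gradient, with
coordinate partial derivatives `g`, is `Lc`-Lipschitz) with minimizer `θstar`.  With constant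
step `β = 2/(lam + Lc)`, uniform coordinate sampling and estimators with uniform errors
`ε j`, the expected parameter error satisfies
`E‖θ^{(T)} − θ*‖₂ ≤ ‖θ^{(0)} − θ*‖₂ (1 − 2βλL/(d(λ+L)))^{T/2}
  + √d (λ+L)/(λL) ‖ε‖₂`. -/
theorem cgd_parameter_error_contraction (d T : ℕ) (hd : 0 < d)
    (R : (Fin d → ℝ) → ℝ) (g : Fin d → (Fin d → ℝ) → ℝ)
    (lam Lc : ℝ) (hlam : 0 < lam) (hLc : 0 < Lc)
    (hderiv : ∀ (θ : Fin d → ℝ) (j : Fin d),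
      HasDerivAt (fun h : ℝ => R (Function.update θ j h)) (g j θ) (θ j))
    (hSC : ∀ θ₁ θ₂ : Fin d → ℝ,
      R θ₁ + (∑ j, g j θ₁ * (θ₂ j - θ₁ j)) + lam / 2 * ∑ j, (θ₂ j - θ₁ j) ^ 2 ≤ R θ₂)
    (hLip : ∀ θ₁ θ₂ : Fin d → ℝ,
      Real.sqrt (∑ j, (g j θ₁ - g j θ₂) ^ 2) ≤ Lc * Real.sqrt (∑ j, (θ₁ j - θ₂ j) ^ 2))
    (θstar : Fin d → ℝ) (hgrad0 : ∀ j, g j θstar = 0)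
    (gh : Fin d → (Fin d → ℝ) → ℝ) (ε : Fin d → ℝ)
    (hest : ∀ (θ : Fin d → ℝ) (j : Fin d), |gh j θ - g j θ| ≤ ε j)
    (θ0 : Fin d → ℝ)
    (θiter : (Fin T → Fin d) → ℕ → (Fin d → ℝ))
    (hinit : ∀ js, θiter js 0 = θ0)
    (hstep : ∀ (js : Fin T → Fin d) (t : Fin T),
      θiter js (t.1 + 1) = Function.update (θiter js t.1) (js t)
        (θiter js t.1 (js t) - (2 / (lam + Lc)) * gh (js t) (θiter js t.1))) :
    (1 / (d : ℝ) ^ T) * ∑ js : Fin T → Fin d,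
        Real.sqrt (∑ j, (θiter js T j - θstar j) ^ 2)
      ≤ Real.sqrt (∑ j, (θ0 j - θstar j) ^ 2)
          * (1 - 2 * (2 / (lam + Lc)) * lam * Lc / ((d : ℝ) * (lam + Lc))) ^ ((T : ℝ) / 2)
        + Real.sqrt d * (lam + Lc) / (lam * Lc) * Real.sqrt (∑ j, ε j ^ 2) :=
  cgd_parameter_error_contraction_general d T hd R g lam Lc hlam hLc hSC hLip θstar hgrad0 gh ε hest
    θ0 θiter hinit hstep
end

section
/- Let R be convex, differentiable, coordinate-wise L_j-smooth on a product domain Θ = ∏_j Θ_j with minimizer θ* of R, and run projected coordinate descent with soft-thresholded noisy gradients: θ^{(t+1)}_{j_t} = proj_{Θ_{j_t}}(θ^{(t)}_{j_t} − (1/L_{j_t}) τ_{ε_{j_t}}(ĝ_{j_t}(θ^{(t)}))), j_t uniform on {1,…,d}, where |ĝ_j(θ) − ∂_j R(θ)| ≤ ε_j for all θ ∈ Θ. Then E[R(θ^{(T)})] − R(θ*) ≤ (d/(T+1)) (∑_j (L_j/2)(θ^{(0)}_j − θ*_j)² + R(θ^{(0)}) − R(θ*)) + (2‖ε‖₂/(T+1))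 ∑_{t=0}^T ‖θ^{(t)} − θ*‖₂, where the expectation is over the coordinate sampling. -/
/-!
Along a step at coordinate `j` the potential `Ψ(θ) = ∑ₖ Lₖ/2 (θₖ - θ*ₖ)² + R(θ)` decreases by at
least `∂ⱼR(θ)(θⱼ - θ*ⱼ) - 2εⱼ|θⱼ - θ*ⱼ|`: the variational inequality of the projection onto
`[aⱼ, bⱼ]` controls the quadratic part, `Lⱼ`-smoothness bounds `R` by its quadratic model, and the
soft-thresholded estimate lies between `0` and `∂ⱼR(θ)` and within `2εⱼ` of it. Averaging over the
uniformly drawn coordinate, convexity turns `∑ⱼ ∂ⱼR(θ)(θⱼ - θ*ⱼ)` into `R(θ) - R(θ*)` and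
Cauchy–Schwarz collects the errors into `2‖ε‖₂‖θ - θ*‖₂`. The coordinate drawn at step `t` is
independent of `θ⁽ᵗ⁾`, so the bound survives taking expectations; telescoping it over `t < T` and
using that `R(θ⁽ᵗ⁾)` is nonincreasing gives the rate.
-/

open Set
open scoped BigOperators

section ProjectedStep

variable {a b s u x y L g ε : ℝ}

lemma sub_max_min_mul_sub_max_min_nonpos (hs : s ∈ Icc a b) :
    (y - max a (min b y)) * (s - max a (min b y)) ≤ 0 := by
  obtain ⟨has, hsb⟩ := hs
  rcases le_total y a with hya | hay
  · rw [min_eq_right (hya.trans (has.trans hsb)), max_eq_left hya]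
    nlinarith
  rcases le_total b y with hby | hyb
  · rw [min_eq_left hby, max_eq_right (has.trans hsb)]
    nlinarith
  · rw [min_eq_right hyb, max_eq_right hay, sub_self, zero_mul]

noncomputable def projStep (a b L u x : ℝ) : ℝ := max a (min b (x - 1 / L * u))

lemma projStep_mem (hx : x ∈ Icc a b) : projStep a b L u x ∈ Icc a b :=
  ⟨le_max_left _ _, max_le (hx.1.trans hx.2) (min_le_left _ _)⟩

lemma projStep_variational (hL : 0 < L) (hs : s ∈ Icc a b) :
    0 ≤ (L * (projStep a b L u x - x) + u) * (s - projStep a b L u x) := by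
  have hproj := sub_max_min_mul_sub_max_min_nonpos (y := x - 1 / L * u) hs
  have hscale : L * (projStep a b L u x - x) + u =
      -L * (x - 1 / L * u - projStep a b L u x) := by
    field_simp
    ring
  rw [hscale, mul_assoc]
  exact mul_nonneg_of_nonpos_of_nonpos (by linarith) hproj

lemma mul_projStep_sub_le (hL : 0 < L) (hx : x ∈ Icc a b) :
    u * (projStep a b L u x - x) ≤ -(L * (projStep a b L u x - x) ^ 2) := by
  have := projStep_variational (u := u) (x := x) hL hx
  nlinarith

lemma projStep_sub_mul_nonpos (hL : 0 < L) (hx : x ∈ Icc a b) (hu : 0 ≤ u * (g - u)) :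
    (g - u) * (projStep a b L u x - x) ≤ 0 := by
  have hstep := mul_projStep_sub_le (u := u) hL hx
  set δ := projStep a b L u x - x
  have hδu : u * δ ≤ 0 := hstep.trans (neg_nonpos.2 (by positivity))
  rcases lt_trichotomy u 0 with hneg | rfl | hpos
  · exact mul_nonpos_of_nonpos_of_nonneg (nonpos_of_mul_nonneg_right hu hneg)
      (nonneg_of_mul_nonpos_right hδu hneg)
  · have hδ : δ ^ 2 = 0 := le_antisymm (by nlinarith) (sq_nonneg δ)
    rw [pow_eq_zero_iff two_ne_zero] at hδ
    rw [hδ, mul_zero]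
  · exact mul_nonpos_of_nonneg_of_nonpos (nonneg_of_mul_nonneg_right hu hpos)
      (nonpos_of_mul_nonpos_right hδu hpos)

lemma projStep_descent (hL : 0 < L) (hx : x ∈ Icc a b) (hu : 0 ≤ u * (g - u)) :
    g * (projStep a b L u x - x) + L / 2 * (projStep a b L u x - x) ^ 2 ≤ 0 := by
  have hstep := mul_projStep_sub_le (u := u) hL hx
  have hsign := projStep_sub_mul_nonpos hL hx hu
  nlinarith [sq_nonneg (projStep a b L u x - x)]

lemma projStep_potential_le (hL : 0 < L) (hx : x ∈ Icc a b) (hs : s ∈ Icc a b)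
    (hu : 0 ≤ u * (g - u)) (hug : |u - g| ≤ 2 * ε) :
    L / 2 * (projStep a b L u x - s) ^ 2
        + (g * (projStep a b L u x - x) + L / 2 * (projStep a b L u x - x) ^ 2)
      ≤ L / 2 * (x - s) ^ 2 - g * (x - s) + 2 * ε * |x - s| := by
  have hvar := projStep_variational (u := u) (x := x) hL hs
  have hsign := projStep_sub_mul_nonpos hL hx hu
  have herr : (g - u) * (x - s) ≤ 2 * ε * |x - s| :=
    calc (g - u) * (x - s) ≤ |u - g| * |x - s| := by
          rw [abs_sub_comm, ← abs_mul]; exact le_abs_self _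
      _ ≤ 2 * ε * |x - s| := mul_le_mul_of_nonneg_right hug (abs_nonneg _)
  linear_combination hvar + hsign + herr

end ProjectedStep

section SoftThreshold

variable {x y ε : ℝ}

noncomputable def softThreshold (ε x : ℝ) : ℝ := Real.sign x * max (|x| - ε) 0

lemma softThreshold_cases (hε : 0 ≤ ε) (x : ℝ) :
    (ε ≤ x ∧ softThreshold ε x = x - ε) ∨ (|x| ≤ ε ∧ softThreshold ε x = 0) ∨
      (x ≤ -ε ∧ softThreshold ε x = x + ε) := by
  unfold softThreshold
  rcases le_or_gt |x| ε with hx | hx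
  · exact Or.inr (Or.inl ⟨hx, by rw [max_eq_right (by linarith), mul_zero]⟩)
  rw [max_eq_left (by linarith)]
  rcases lt_abs.1 hx with hx | hx
  · have hpos : 0 < x := by linarith
    rw [Real.sign_of_pos hpos, abs_of_pos hpos]
    exact Or.inl ⟨hx.le, by ring⟩
  · have hneg : x < 0 := by linarith
    rw [Real.sign_of_neg hneg, abs_of_neg hneg]
    exact Or.inr (Or.inr ⟨by linarith, by ring⟩)

lemma abs_softThreshold_sub_le (h : |x - y| ≤ ε) : |softThreshold ε x - y| ≤ 2 * ε := by
  have hε : 0 ≤ ε := (abs_nonneg _).trans h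
  rw [abs_le] at h ⊢
  rcases softThreshold_cases hε x with ⟨-, hτ⟩ | ⟨hx, hτ⟩ | ⟨-, hτ⟩ <;> rw [hτ]
  · constructor <;> linarith
  · rw [abs_le] at hx
    constructor <;> linarith
  · constructor <;> linarith

lemma softThreshold_mul_sub_nonneg (h : |x - y| ≤ ε) :
    0 ≤ softThreshold ε x * (y - softThreshold ε x) := by
  have hε : 0 ≤ ε := (abs_nonneg _).trans h
  rw [abs_le] at h
  rcases softThreshold_cases hε x with ⟨hx, hτ⟩ | ⟨-, hτ⟩ | ⟨hx, hτ⟩ <;> rw [hτ]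
  · exact mul_nonneg (by linarith) (by linarith)
  · rw [zero_mul]
  · exact mul_nonneg_of_nonpos_of_nonpos (by linarith) (by linarith)

end SoftThreshold

lemma le_of_hasDerivAt_mul_sub_nonneg {ψ ψ' : ℝ → ℝ} {x y : ℝ}
    (hψ : ∀ z ∈ uIcc x y, HasDerivAt ψ (ψ' z) z) (hsign : ∀ z ∈ uIcc x y, 0 ≤ ψ' z * (z - x)) :
    ψ x ≤ ψ y := by
  have hcont : ContinuousOn ψ (uIcc x y) := fun z hz => (hψ z hz).continuousAt.continuousWithinAt
  rcases le_total x y with hxy | hyx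
  · rw [uIcc_of_le hxy] at hψ hsign hcont
    refine monotoneOn_of_hasDerivWithinAt_nonneg (convex_Icc x y) hcont
      (fun z hz => (hψ z (interior_subset hz)).hasDerivWithinAt) (fun z hz => ?_)
      (left_mem_Icc.2 hxy) (right_mem_Icc.2 hxy) hxy
    rw [interior_Icc] at hz
    exact nonneg_of_mul_nonneg_left (hsign z (Ioo_subset_Icc_self hz)) (sub_pos.2 hz.1)
  · rw [uIcc_of_ge hyx] at hψ hsign hcont
    refine antitoneOn_of_hasDerivWithinAt_nonpos (convex_Icc y x) hcont
      (fun z hz => (hψ z (interior_subset hz)).hasDerivWithinAt) (fun z hz => ?_)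
      (left_mem_Icc.2 hyx) (right_mem_Icc.2 hyx) hyx
    rw [interior_Icc] at hz
    exact nonpos_of_mul_nonneg_left (hsign z (Ioo_subset_Icc_self hz)) (sub_neg.2 hz.2)

lemma image_le_add_deriv_mul_add_sq {f f' : ℝ → ℝ} {x y L : ℝ}
    (hf : ∀ z ∈ uIcc x y, HasDerivAt f (f' z) z)
    (hf' : ∀ z ∈ uIcc x y, |f' z - f' x| ≤ L * |z - x|) :
    f y ≤ f x + f' x * (y - x) + L / 2 * (y - x) ^ 2 := by
  have key := le_of_hasDerivAt_mul_sub_nonneg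
    (ψ := fun z => f x + f' x * (z - x) + L / 2 * (z - x) ^ 2 - f z)
    (ψ' := fun z => f' x + L * (z - x) - f' z) (x := x) (y := y)
    (fun z hz => by
      have hlin := (((hasDerivAt_id' z).sub_const x).const_mul (f' x)).const_add (f x)
      have hsq := (((hasDerivAt_id' z).sub_const x).pow 2).const_mul (L / 2)
      exact ((hlin.add hsq).sub (hf z hz)).congr_deriv (by ring))
    (fun z hz => by
      have hlip := hf' z hz
      have habs : (f' z - f' x) * (z - x) ≤ L * (z - x) ^ 2 := by
        calc (f' z - f' x) * (z - x) ≤ |f' z - f' x| * |z - x| := by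
              rw [← abs_mul]; exact le_abs_self _
          _ ≤ L * |z - x| * |z - x| := mul_le_mul_of_nonneg_right hlip (abs_nonneg _)
          _ = L * (z - x) ^ 2 := by rw [mul_assoc, ← sq, sq_abs]
      linarith)
  simp only [sub_self, mul_zero, add_zero, zero_pow two_ne_zero] at key
  linarith

section Potential

variable {ι : Type*} [Fintype ι]

noncomputable def potential (L θstar : ι → ℝ) (R : (ι → ℝ) → ℝ) (θ : ι → ℝ) : ℝ :=
  (∑ j, L j / 2 * (θ j - θstar j) ^ 2) + R θ

lemma le_potential {L : ι → ℝ} (hL : ∀ j, 0 ≤ L j) (θstar : ι → ℝ) (R : (ι → ℝ) → ℝ)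
    (θ : ι → ℝ) : R θ ≤ potential L θstar R θ :=
  le_add_of_nonneg_left (Finset.sum_nonneg fun j _ => by have := hL j; positivity)

end Potential

section CoordinateStep

variable {ι : Type*} [DecidableEq ι]

lemma sum_apply_update [Fintype ι] (F : ι → ℝ → ℝ) (θ : ι → ℝ) (j : ι) (y : ℝ) :
    ∑ k, F k (Function.update θ j y k) = ∑ k, F k (θ k) + (F j y - F j (θ j)) := by
  simp only [Function.apply_update F θ j y, Finset.sum_update_of_mem (Finset.mem_univ j),
    Finset.sum_eq_add_sum_sdiff_singleton_of_mem (Finset.mem_univ j) (fun k => F k (θ k))]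
  ring

noncomputable def cdStep (a b : ι → ℝ) (gh : ι → (ι → ℝ) → ℝ) (L ε : ι → ℝ) (θ : ι → ℝ)
    (j : ι) : ι → ℝ :=
  Function.update θ j (projStep (a j) (b j) (L j) (softThreshold (ε j) (gh j θ)) (θ j))

def HasPartialDerivsOn (a b : ι → ℝ) (R : (ι → ℝ) → ℝ) (g : ι → (ι → ℝ) → ℝ) : Prop :=
  ∀ θ : ι → ℝ, (∀ j, θ j ∈ Icc (a j) (b j)) → ∀ j : ι,
    HasDerivAt (fun h : ℝ => R (Function.update θ j h)) (g j θ) (θ j)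

def PartialDerivsLipschitzOn (a b L : ι → ℝ) (g : ι → (ι → ℝ) → ℝ) : Prop :=
  ∀ θ : ι → ℝ, (∀ j, θ j ∈ Icc (a j) (b j)) →
    ∀ (j : ι) (h : ℝ), (∀ k, Function.update θ j (θ j + h) k ∈ Icc (a k) (b k)) →
      |g j (Function.update θ j (θ j + h)) - g j θ| ≤ L j * |h|

variable {a b L ε θ θstar : ι → ℝ} {R : (ι → ℝ) → ℝ} {g gh : ι → (ι → ℝ) → ℝ}

lemma update_mem_box (hθ : ∀ k, θ k ∈ Icc (a k) (b k)) {j : ι} {y : ℝ}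
    (hy : y ∈ Icc (a j) (b j)) : ∀ k, Function.update θ j y k ∈ Icc (a k) (b k) :=
  (Function.forall_update_iff θ fun k v => v ∈ Icc (a k) (b k)).2 ⟨hy, fun k _ => hθ k⟩

lemma cdStep_mem (hθ : ∀ k, θ k ∈ Icc (a k) (b k)) (j : ι) :
    ∀ k, cdStep a b gh L ε θ j k ∈ Icc (a k) (b k) :=
  update_mem_box hθ (projStep_mem (hθ j))

lemma apply_update_le_quadratic (hderiv : HasPartialDerivsOn a b R g)
    (hsmooth : PartialDerivsLipschitzOn a b L g)
    (hθ : ∀ k, θ k ∈ Icc (a k) (b k)) (j : ι) {y : ℝ} (hy : y ∈ Icc (a j) (b j)) :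
    R (Function.update θ j y) ≤ R θ + g j θ * (y - θ j) + L j / 2 * (y - θ j) ^ 2 := by
  have hsub : uIcc (θ j) y ⊆ Icc (a j) (b j) := uIcc_subset_Icc (hθ j) hy
  have h := image_le_add_deriv_mul_add_sq (f := fun h => R (Function.update θ j h))
    (f' := fun z => g j (Function.update θ j z)) (L := L j)
    (fun z hz => by
      simpa using hderiv _ (update_mem_box hθ (hsub hz)) j)
    (fun z hz => by
      have h := hsmooth θ hθ j (z - θ j)
        (by rw [add_sub_cancel]; exact update_mem_box hθ (hsub hz))
      rw [Function.update_eq_self]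
      rwa [add_sub_cancel] at h)
  simpa only [Function.update_eq_self] using h

lemma apply_cdStep_le (hL : ∀ j, 0 < L j) (hderiv : HasPartialDerivsOn a b R g)
    (hsmooth : PartialDerivsLipschitzOn a b L g)
    (hest : ∀ θ : ι → ℝ, (∀ j, θ j ∈ Icc (a j) (b j)) → ∀ j, |gh j θ - g j θ| ≤ ε j)
    (hθ : ∀ k, θ k ∈ Icc (a k) (b k)) (j : ι) :
    R (cdStep a b gh L ε θ j) ≤ R θ := by
  have hquad := apply_update_le_quadratic hderiv hsmooth hθ j
    (projStep_mem (L := L j) (u := softThreshold (ε j) (gh j θ)) (hθ j))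
  have hdesc := projStep_descent (L := L j) (hL j) (hθ j)
    (softThreshold_mul_sub_nonneg (hest θ hθ j))
  unfold cdStep
  linarith

lemma potential_cdStep_le [Fintype ι] (hL : ∀ j, 0 < L j) (hderiv : HasPartialDerivsOn a b R g)
    (hsmooth : PartialDerivsLipschitzOn a b L g)
    (hest : ∀ θ : ι → ℝ, (∀ j, θ j ∈ Icc (a j) (b j)) → ∀ j, |gh j θ - g j θ| ≤ ε j)
    (hθs : ∀ k, θstar k ∈ Icc (a k) (b k))
    (hθ : ∀ k, θ k ∈ Icc (a k) (b k)) (j : ι) :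
    potential L θstar R (cdStep a b gh L ε θ j)
      ≤ potential L θstar R θ - g j θ * (θ j - θstar j) + 2 * ε j * |θ j - θstar j| := by
  have hquad := apply_update_le_quadratic hderiv hsmooth hθ j
    (projStep_mem (L := L j) (u := softThreshold (ε j) (gh j θ)) (hθ j))
  have hpot := projStep_potential_le (L := L j) (hL j) (hθ j) (hθs j)
    (softThreshold_mul_sub_nonneg (hest θ hθ j)) (abs_softThreshold_sub_le (hest θ hθ j))
  unfold potential cdStep
  rw [sum_apply_update (fun k v => L k / 2 * (v - θstar k) ^ 2)]
  linarith

end CoordinateStep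

section CoordinateAverage

variable {ι : Type*} [Fintype ι] [DecidableEq ι] [Nonempty ι]
  {a b L ε θ θstar : ι → ℝ} {R : (ι → ℝ) → ℝ} {g gh : ι → (ι → ℝ) → ℝ}

lemma expect_potential_cdStep_le (hL : ∀ j, 0 < L j) (hderiv : HasPartialDerivsOn a b R g)
    (hsmooth : PartialDerivsLipschitzOn a b L g)
    (hest : ∀ θ : ι → ℝ, (∀ j, θ j ∈ Icc (a j) (b j)) → ∀ j, |gh j θ - g j θ| ≤ ε j)
    (hθs : ∀ k, θstar k ∈ Icc (a k) (b k)) (hθ : ∀ k, θ k ∈ Icc (a k) (b k))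
    (hconv : R θ + ∑ j, g j θ * (θstar j - θ j) ≤ R θstar) :
    𝔼 j, potential L θstar R (cdStep a b gh L ε θ j)
      ≤ potential L θstar R θ - (R θ - R θstar
          - 2 * √(∑ j, ε j ^ 2) * √(∑ j, (θ j - θstar j) ^ 2)) / Fintype.card ι := by
  have hcs : ∑ j, ε j * |θ j - θstar j| ≤ √(∑ j, ε j ^ 2) * √(∑ j, (θ j - θstar j) ^ 2) := by
    simpa only [sq_abs] using Real.sum_mul_le_sqrt_mul_sqrt Finset.univ ε fun j => |θ j - θstar j|
  have hlin : ∑ j, g j θ * (θstar j - θ j) = -∑ j, g j θ * (θ j - θstar j) := by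
    rw [← Finset.sum_neg_distrib]
    exact Finset.sum_congr rfl fun j _ => by ring
  calc 𝔼 j, potential L θstar R (cdStep a b gh L ε θ j)
      ≤ 𝔼 j, (potential L θstar R θ - g j θ * (θ j - θstar j) + 2 * ε j * |θ j - θstar j|) :=
        Finset.expect_le_expect fun j _ => potential_cdStep_le hL hderiv hsmooth hest hθs hθ j
    _ = potential L θstar R θ - (∑ j, g j θ * (θ j - θstar j)
          - 2 * ∑ j, ε j * |θ j - θstar j|) / Fintype.card ι := by
        have hcard : (Fintype.card ι : ℝ) ≠ 0 := Nat.cast_ne_zero.2 Fintype.card_ne_zero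
        rw [Fintype.expect_eq_sum_div_card]
        simp only [Finset.sum_add_distrib, Finset.sum_sub_distrib, Finset.sum_const,
          Finset.card_univ, nsmul_eq_mul, mul_assoc, ← Finset.mul_sum]
        field_simp
        ring
    _ ≤ _ := sub_le_sub_left (div_le_div_of_nonneg_right (by linarith) (Nat.cast_nonneg _)) _

end CoordinateAverage

section RandomIterates

variable {X β : Type*} {T : ℕ} {step : X → β → X} {x : (Fin T → β) → ℕ → X} {x0 : X}

lemma iterate_mem {S : Set X} (hS : ∀ y ∈ S, ∀ j, step y j ∈ S) (h0 : x0 ∈ S)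
    (hx0 : ∀ js, x js 0 = x0)
    (hstep : ∀ js (t : ℕ) (ht : t < T), x js (t + 1) = step (x js t) (js ⟨t, ht⟩))
    (js : Fin T → β) {t : ℕ} (ht : t ≤ T) : x js t ∈ S := by
  induction t with
  | zero => rw [hx0]; exact h0
  | succ t ih => rw [hstep js t ht]; exact hS _ (ih (by omega)) _

lemma iterate_congr (hx0 : ∀ js, x js 0 = x0)
    (hstep : ∀ js (t : ℕ) (ht : t < T), x js (t + 1) = step (x js t) (js ⟨t, ht⟩))
    {js js' : Fin T → β} {t : ℕ} (ht : t ≤ T) (h : ∀ i : Fin T, i.1 < t → js i = js' i) :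
    x js t = x js' t := by
  induction t with
  | zero => rw [hx0, hx0]
  | succ t ih =>
    rw [hstep js t ht, hstep js' t ht, ih (by omega) fun i hi => h i (by omega),
      h ⟨t, ht⟩ (Nat.lt_succ_self t)]

lemma expect_expect_update {α M : Type*} [Fintype α] [DecidableEq α] [Fintype β] [Nonempty β]
    [AddCommMonoid M] [Module ℚ≥0 M] (i : α) (F : (α → β) → M) :
    𝔼 f, 𝔼 y, F (Function.update f i y) = 𝔼 f, F f := by
  have hinv : Function.Involutive fun p : (α → β) × β => (Function.update p.1 i p.2, p.1 i) := by
    rintro ⟨f, y⟩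
    simp
  calc 𝔼 f, 𝔼 y, F (Function.update f i y)
      = 𝔼 p : (α → β) × β, F (Function.update p.1 i p.2) := by
        rw [← Finset.expect_product', Finset.univ_product_univ]
    _ = 𝔼 p : (α → β) × β, F p.1 := Fintype.expect_equiv hinv.toPerm _ _ fun _ => rfl
    _ = 𝔼 f, 𝔼 _y : β, F f := by rw [← Finset.expect_product', Finset.univ_product_univ]
    _ = 𝔼 f, F f := by simp only [Fintype.expect_const]

lemma expect_iterate_succ [Fintype β] [Nonempty β] (hx0 : ∀ js, x js 0 = x0)
    (hstep : ∀ js (t : ℕ) (ht : t < T), x js (t + 1) = step (x js t) (js ⟨t, ht⟩))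
    (Φ : X → ℝ) {t : ℕ} (ht : t < T) :
    𝔼 js, Φ (x js (t + 1)) = 𝔼 js, 𝔼 j, Φ (step (x js t) j) := by
  classical
  rw [← expect_expect_update ⟨t, ht⟩ fun js => Φ (x js (t + 1))]
  refine Finset.expect_congr rfl fun js _ => Finset.expect_congr rfl fun j _ => ?_
  rw [hstep _ t ht, Function.update_self, iterate_congr hx0 hstep ht.le fun i hi =>
    Function.update_of_ne (Fin.ne_of_val_ne hi.ne) _ _]

lemma expect_iterate_succ_le [Fintype β] [Nonempty β] {S : Set X} {Φ P Q : X → ℝ} {c d : ℝ}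
    (hΦ : ∀ y ∈ S, 𝔼 j, Φ (step y j) ≤ Φ y - (P y - c * Q y) / d)
    (hx0 : ∀ js, x js 0 = x0)
    (hstep : ∀ js (t : ℕ) (ht : t < T), x js (t + 1) = step (x js t) (js ⟨t, ht⟩))
    {t : ℕ} (ht : t < T) (hS : ∀ js, x js t ∈ S) :
    𝔼 js, Φ (x js (t + 1))
      ≤ 𝔼 js, Φ (x js t) - (𝔼 js, P (x js t) - c * 𝔼 js, Q (x js t)) / d := by
  rw [expect_iterate_succ hx0 hstep Φ ht]
  calc 𝔼 js, 𝔼 j, Φ (step (x js t) j)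
      ≤ 𝔼 js, (Φ (x js t) - (P (x js t) - c * Q (x js t)) / d) :=
        Finset.expect_le_expect fun js _ => hΦ _ (hS js)
    _ = _ := by simp only [Finset.expect_sub_distrib, ← Finset.expect_div, ← Finset.mul_expect]

end RandomIterates

lemma le_of_potential_descent {T : ℕ} {d c : ℝ} {A B C : ℕ → ℝ} (hd : 1 ≤ d) (hc : 0 ≤ c)
    (hC : ∀ t, 0 ≤ C t) (hA : ∀ t < T, A (t + 1) ≤ A t - (B t - c * C t) / d)
    (hB : ∀ t < T, B (t + 1) ≤ B t) (hBT : 0 ≤ B T) (hBA : B T ≤ A T) :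
    B T ≤ d / (T + 1) * A 0 + c / (T + 1) * ∑ t ∈ Finset.range (T + 1), C t := by
  have hd0 : 0 < d := by linarith
  have htel : ∀ k ≤ T, ∑ t ∈ Finset.range k, (B t - c * C t) ≤ d * (A 0 - A k) := by
    intro k hk
    induction k with
    | zero => simp
    | succ k ih =>
      have hk' : k < T := hk
      have := le_sub_comm.1 (hA k hk')
      rw [div_le_iff₀ hd0] at this
      rw [Finset.sum_range_succ]
      linarith [ih hk'.le]
  have hmono : ∀ t ≤ T, B T ≤ B t := fun t ht =>
    Nat.decreasingInduction (motive := fun t _ => B T ≤ B t)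
      (fun k hk ih => ih.trans (hB k hk)) le_rfl ht
  have hsum : ((T : ℝ) + 1) * B T ≤ ∑ t ∈ Finset.range (T + 1), B t := by
    have := Finset.sum_le_sum fun t ht => hmono t (Finset.mem_range_succ_iff.1 ht)
    simpa using this
  have hCT : 0 ≤ c * C T := mul_nonneg hc (hC T)
  have hAT : B T ≤ d * A T := hBA.trans (le_mul_of_one_le_left (hBT.trans hBA) hd)
  have htot : ((T : ℝ) + 1) * B T ≤ d * A 0 + c * ∑ t ∈ Finset.range (T + 1), C t := by
    have h := htel T le_rfl
    rw [Finset.sum_sub_distrib, ← Finset.mul_sum] at h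
    rw [Finset.sum_range_succ] at hsum ⊢
    linarith
  rw [div_mul_eq_mul_div, div_mul_eq_mul_div, ← add_div, le_div_iff₀ (by positivity)]
  linarith

lemma expect_fin_fun_eq {d T : ℕ} (F : (Fin T → Fin d) → ℝ) :
    𝔼 js, F js = 1 / (d : ℝ) ^ T * ∑ js, F js := by
  rw [Fintype.expect_eq_sum_div_card, Fintype.card_fun, Fintype.card_fin, Fintype.card_fin,
    Nat.cast_pow, one_div_mul_eq_div]

theorem cgd_no_strong_convexity_general (d T : ℕ) (hd : 0 < d)
    (a b : Fin d → ℝ)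
    (R : (Fin d → ℝ) → ℝ) (g gh : Fin d → (Fin d → ℝ) → ℝ)
    (L : Fin d → ℝ) (hL : ∀ j, 0 < L j) (ε : Fin d → ℝ)
    (hderiv : ∀ θ : Fin d → ℝ, (∀ j, θ j ∈ Set.Icc (a j) (b j)) → ∀ j : Fin d,
      HasDerivAt (fun h : ℝ => R (Function.update θ j h)) (g j θ) (θ j))
    (hconv : ∀ θ₁ : Fin d → ℝ, (∀ j, θ₁ j ∈ Set.Icc (a j) (b j)) →
      ∀ θ₂ : Fin d → ℝ, (∀ j, θ₂ j ∈ Set.Icc (a j) (b j)) →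
      R θ₁ + ∑ j, g j θ₁ * (θ₂ j - θ₁ j) ≤ R θ₂)
    (hsmooth : ∀ θ : Fin d → ℝ, (∀ j, θ j ∈ Set.Icc (a j) (b j)) →
      ∀ (j : Fin d) (h : ℝ), (∀ k, Function.update θ j (θ j + h) k ∈ Set.Icc (a k) (b k)) →
      |g j (Function.update θ j (θ j + h)) - g j θ| ≤ L j * |h|)
    (θstar : Fin d → ℝ) (hθs : ∀ j, θstar j ∈ Set.Icc (a j) (b j))
    (hmin : ∀ j, g j θstar = 0)
    (hest : ∀ θ : Fin d → ℝ, (∀ j, θ j ∈ Set.Icc (a j) (b j)) →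
      ∀ j, |gh j θ - g j θ| ≤ ε j)
    (θ0 : Fin d → ℝ) (hθ0 : ∀ j, θ0 j ∈ Set.Icc (a j) (b j))
    (θiter : (Fin T → Fin d) → ℕ → (Fin d → ℝ))
    (hinit : ∀ js, θiter js 0 = θ0)
    (hstep : ∀ (js : Fin T → Fin d) (t : Fin T),
      θiter js (t.1 + 1) = Function.update (θiter js t.1) (js t)
        (max (a (js t)) (min (b (js t))
          (θiter js t.1 (js t) - (1 / L (js t)) *
            (Real.sign (gh (js t) (θiter js t.1)) *
              max (|gh (js t) (θiter js t.1)| - ε (js t)) 0))))) :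
    (1 / (d : ℝ) ^ T) * (∑ js : Fin T → Fin d, R (θiter js T)) - R θstar
      ≤ (d : ℝ) / (T + 1) *
          ((∑ j, L j / 2 * (θ0 j - θstar j) ^ 2) + R θ0 - R θstar)
        + 2 * Real.sqrt (∑ j, ε j ^ 2) / (T + 1) *
          ∑ t ∈ Finset.range (T + 1), (1 / (d : ℝ) ^ T) *
            ∑ js : Fin T → Fin d, Real.sqrt (∑ j, (θiter js t j - θstar j) ^ 2) := by
  have : Nonempty (Fin d) := ⟨⟨0, hd⟩⟩
  set box : Set (Fin d → ℝ) := {θ | ∀ k, θ k ∈ Icc (a k) (b k)}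
  have hcd : ∀ js (t : ℕ) (ht : t < T),
      θiter js (t + 1) = cdStep a b gh L ε (θiter js t) (js ⟨t, ht⟩) :=
    fun js t ht => hstep js ⟨t, ht⟩
  have hdom : ∀ js, ∀ t ≤ T, θiter js t ∈ box := fun js t ht =>
    iterate_mem (S := box) (step := cdStep a b gh L ε) (fun _ hθ j => cdStep_mem hθ j) hθ0 hinit
      hcd js ht
  have hRstar : ∀ θ ∈ box, R θstar ≤ R θ := fun θ hθ => by
    simpa only [hmin, zero_mul, Finset.sum_const_zero, add_zero] using hconv θstar hθs θ hθ
  have key := le_of_potential_descent (T := T) (d := d) (c := 2 * √(∑ j, ε j ^ 2))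
    (A := fun t => 𝔼 js, potential L θstar R (θiter js t) - R θstar)
    (B := fun t => 𝔼 js, R (θiter js t) - R θstar)
    (C := fun t => 𝔼 js, √(∑ j, (θiter js t j - θstar j) ^ 2))
    (by exact_mod_cast hd) (by positivity)
    (fun t => Finset.expect_nonneg fun _ _ => Real.sqrt_nonneg _)
    (fun t ht => by
      have h := expect_iterate_succ_le (S := box) (P := fun θ => R θ - R θstar)
        (Q := fun θ => √(∑ j, (θ j - θstar j) ^ 2))
        (fun θ hθ => by
          simpa only [Fintype.card_fin] using expect_potential_cdStep_le hL hderiv hsmooth hest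
            hθs hθ (hconv θ hθ θstar hθs))
        hinit hcd ht (fun js => hdom js t ht.le)
      rw [Finset.expect_sub_distrib, Fintype.expect_const] at h
      linarith)
    (fun t ht => sub_le_sub_right (Finset.expect_le_expect fun js _ => by
      rw [hcd js t ht]; exact apply_cdStep_le hL hderiv hsmooth hest (hdom js t ht.le) _) _)
    (sub_nonneg.2 (Finset.le_expect Finset.univ_nonempty fun js _ =>
      hRstar _ (hdom js T le_rfl)))
    (sub_le_sub_right (Finset.expect_le_expect fun _ _ =>
      le_potential (fun j => (hL j).le) _ _ _) _)
  simpa only [hinit, Fintype.expect_const, expect_fin_fun_eq, potential] using key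

/-- Sublinear `O(1/T)` rate for projected coordinate descent with soft-thresholded noisy
gradients, without strong convexity.  On the product domain `Θ = ∏_j [a j, b j]`, `R` is
convex (first-order condition w.r.t. its coordinate partial derivatives `g`), coordinate-wise
`L j`-smooth, with minimizer `θstar ∈ Θ` satisfying `g j θstar = 0`.  The update at a
uniformly sampled coordinate `j` is
`θ_j ← proj_{[a j, b j]}(θ_j − (1/L_j) τ_{ε_j}(ĝ_j(θ)))`.  Averaging over the `d^T`
equiprobable coordinate sequences,
`E[R(θ^{(T)})] − R(θ*) ≤ (d/(T+1)) (∑_j (L_j/2)(θ^{(0)}_j − θ*_j)² + R(θ^{(0)}) − R(θ*))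
  + (2‖ε‖₂/(T+1)) ∑_{t=0}^T E‖θ^{(t)} − θ*‖₂`. -/
theorem cgd_no_strong_convexity (d T : ℕ) (hd : 0 < d)
    (a b : Fin d → ℝ) (hab : ∀ j, a j ≤ b j)
    (R : (Fin d → ℝ) → ℝ) (g gh : Fin d → (Fin d → ℝ) → ℝ)
    (L : Fin d → ℝ) (hL : ∀ j, 0 < L j) (ε : Fin d → ℝ) (hε : ∀ j, 0 ≤ ε j)
    (hderiv : ∀ θ : Fin d → ℝ, (∀ j, θ j ∈ Set.Icc (a j) (b j)) → ∀ j : Fin d,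
      HasDerivAt (fun h : ℝ => R (Function.update θ j h)) (g j θ) (θ j))
    (hconv : ∀ θ₁ : Fin d → ℝ, (∀ j, θ₁ j ∈ Set.Icc (a j) (b j)) →
      ∀ θ₂ : Fin d → ℝ, (∀ j, θ₂ j ∈ Set.Icc (a j) (b j)) →
      R θ₁ + ∑ j, g j θ₁ * (θ₂ j - θ₁ j) ≤ R θ₂)
    (hsmooth : ∀ θ : Fin d → ℝ, (∀ j, θ j ∈ Set.Icc (a j) (b j)) →
      ∀ (j : Fin d) (h : ℝ), (∀ k, Function.update θ j (θ j + h) k ∈ Set.Icc (a k) (b k)) →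
      |g j (Function.update θ j (θ j + h)) - g j θ| ≤ L j * |h|)
    (θstar : Fin d → ℝ) (hθs : ∀ j, θstar j ∈ Set.Icc (a j) (b j))
    (hmin : ∀ j, g j θstar = 0)
    (hest : ∀ θ : Fin d → ℝ, (∀ j, θ j ∈ Set.Icc (a j) (b j)) →
      ∀ j, |gh j θ - g j θ| ≤ ε j)
    (θ0 : Fin d → ℝ) (hθ0 : ∀ j, θ0 j ∈ Set.Icc (a j) (b j))
    (θiter : (Fin T → Fin d) → ℕ → (Fin d → ℝ))
    (hinit : ∀ js, θiter js 0 = θ0)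
    (hstep : ∀ (js : Fin T → Fin d) (t : Fin T),
      θiter js (t.1 + 1) = Function.update (θiter js t.1) (js t)
        (max (a (js t)) (min (b (js t))
          (θiter js t.1 (js t) - (1 / L (js t)) *
            (Real.sign (gh (js t) (θiter js t.1)) *
              max (|gh (js t) (θiter js t.1)| - ε (js t)) 0))))) :
    (1 / (d : ℝ) ^ T) * (∑ js : Fin T → Fin d, R (θiter js T)) - R θstar
      ≤ (d : ℝ) / (T + 1) *
          ((∑ j, L j / 2 * (θ0 j - θstar j) ^ 2) + R θ0 - R θstar)
        + 2 * Real.sqrt (∑ j, ε j ^ 2) / (T + 1) *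
          ∑ t ∈ Finset.range (T + 1), (1 / (d : ℝ) ^ T) *
            ∑ js : Fin T → Fin d, Real.sqrt (∑ j, (θiter js t j - θstar j) ^ 2) :=
  cgd_no_strong_convexity_general d T hd a b R g gh L hL ε hderiv hconv hsmooth θstar hθs hmin hest
    θ0 hθ0 θiter hinit hstep
end
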